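/- arXiv:2206.00073 — 2 statements merged into one kernel-verified Lean document; each statement's English description precedes it below -/
import Mathlib

section
/- Let w ∈ S_n avoid 3412 and 4231, and let s be a simple transposition with sw < w < ws. If ws contains the pattern 4231 or 3412 (i.e., ws is singular), then there is no permutation z with z ≤ w, ℓ(z) = ℓ(w) − 1, and zs < z. -/
open Equiv

/-- `rk w i j` = #{k ≤ i : w(k) ≤ j} (1-indexed), for `w ∈ S_n`. -/
def rk {n : ℕ} (w : Equiv.Perm (Fin n)) (i j : ℕ) : ℕ :=
  (Finset.univ.filter (fun k : Fin n => (k : ℕ) + 1 ≤ i ∧ (w k : ℕ) + 1 ≤ j)).card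

/-- Bruhat order on `S_n` via the rank-matrix criterion: `z ≤ w` iff
`r_{i,j}(z) ≥ r_{i,j}(w)` for all `i,j`. -/
def BruhatLE {n : ℕ} (z w : Equiv.Perm (Fin n)) : Prop :=
  ∀ i ≤ n, ∀ j ≤ n, rk w i j ≤ rk z i j

def BruhatLT {n : ℕ} (z w : Equiv.Perm (Fin n)) : Prop :=
  BruhatLE z w ∧ z ≠ w

/-- Coxeter length = number of inversions. -/
def len {n : ℕ} (w : Equiv.Perm (Fin n)) : ℕ :=
  (Finset.univ.filter (fun p : Fin n × Fin n => p.1 < p.2 ∧ w p.2 < w p.1)).card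

/-- One-line notation of `w`, 1-indexed, extended by the identity outside `[1,n]`
(so that `w(n+1) = n+1`). -/
def ol {n : ℕ} (w : Equiv.Perm (Fin n)) (k : ℕ) : ℕ :=
  if h : 1 ≤ k ∧ k ≤ n then ((w ⟨k - 1, by omega⟩ : Fin n) : ℕ) + 1 else k

/-- The coessential set of `w` (1-indexed pairs). -/
def Coess {n : ℕ} (w : Equiv.Perm (Fin n)) : Set (ℕ × ℕ) :=
  {p | 1 ≤ p.1 ∧ p.1 ≤ n ∧ 1 ≤ p.2 ∧ p.2 ≤ n ∧
    ol w p.1 ≤ p.2 ∧ p.2 < ol w (p.1 + 1) ∧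
    ol w⁻¹ p.2 ≤ p.1 ∧ p.1 < ol w⁻¹ (p.2 + 1)}

/-- `w` contains the pattern 312. -/
def Has312 {n : ℕ} (w : Equiv.Perm (Fin n)) : Prop :=
  ∃ a b c : Fin n, a < b ∧ b < c ∧ w b < w c ∧ w c < w a

/-- `w` contains the pattern 3412. -/
def Has3412 {n : ℕ} (w : Equiv.Perm (Fin n)) : Prop :=
  ∃ a b c d : Fin n, a < b ∧ b < c ∧ c < d ∧ w c < w d ∧ w d < w a ∧ w a < w b

/-- `w` contains the pattern 4231. -/
def Has4231 {n : ℕ} (w : Equiv.Perm (Fin n)) : Prop :=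
  ∃ a b c d : Fin n, a < b ∧ b < c ∧ c < d ∧ w d < w b ∧ w b < w c ∧ w c < w a

/-- `w` is smooth iff it avoids 3412 and 4231. -/
def SmoothPerm {n : ℕ} (w : Equiv.Perm (Fin n)) : Prop := ¬ Has3412 w ∧ ¬ Has4231 w

/-- `w` is codominant iff `i ≤ j` for every `(i,j)` in the coessential set. -/
def Codominant {n : ℕ} (w : Equiv.Perm (Fin n)) : Prop :=
  ∀ p ∈ Coess w, p.1 ≤ p.2

/-- Lexicographic comparison on one-line notations. -/
def LexLe {n : ℕ} (u w : Equiv.Perm (Fin n)) : Prop :=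
  u = w ∨ ∃ i : Fin n, (∀ j < i, u j = w j) ∧ u i < w i

/-- `m` is a Hessenberg function (0-indexed): non-decreasing and `m i ≥ i`. -/
def Hess {n : ℕ} (m : Fin n → Fin n) : Prop :=
  Monotone m ∧ ∀ i, i ≤ m i

/-- `w` is the lexicographically greatest permutation with `w i ≤ m i` for all `i`. -/
def IsLexMax {n : ℕ} (m : Fin n → Fin n) (w : Equiv.Perm (Fin n)) : Prop :=
  (∀ i, w i ≤ m i) ∧ ∀ u : Equiv.Perm (Fin n), (∀ i, u i ≤ m i) → LexLe u w

instance {n : ℕ} (z w : Equiv.Perm (Fin n)) : Decidable (BruhatLE z w) := by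
  unfold BruhatLE; exact Nat.decidableBallLE _ _

/-!
Since `w < ws`, the permutation `w` has an ascent at `l`, and since `zs < z`, `z` has a descent
at `l`. In the rank-matrix description of the Bruhat order, whenever `z ≤ w` and `z ≠ w` one finds
an inversion `(i, j)` of `w` with `z ≤ w (i j) < w`, built from the first position where `z` and `w`
differ; hence length is strictly monotone, and a cover `z ⋖ w` is `z = w (i j)` with no value of
`w` strictly between `w j` and `w i` at a position strictly between `i` and `j`. The descent of `z`
at `l` forces `j = l` (with `w i > w (l+1)`) or `i = l + 1` (with `w j < w l`).

As `w` is smooth, an occurrence of 3412 or 4231 in `ws` must use the adjacent positions `l, l+1`,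
which leaves three configurations of `w` around them. In each, the covering inversion either
completes a 3412 or 4231 in `w`, or supplies a forbidden intermediate value.
-/

open Finset

section Permutations

variable {n : ℕ}

section Rank

lemma rk_eq_sum (w : Perm (Fin n)) (a b : ℕ) :
    rk w a b = ∑ k : Fin n, if (k : ℕ) < a ∧ (w k : ℕ) < b then 1 else 0 := by
  simp only [rk, card_filter, Nat.add_one_le_iff]

lemma sum_add_eq_sum_add_of_eq_off_pair {α : Type*} [Fintype α] [DecidableEq α] {f g : α → ℕ}
    {i j : α} (hij : i ≠ j) (h : ∀ k, k ≠ i → k ≠ j → f k = g k) :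
    ∑ k, f k + (g i + g j) = ∑ k, g k + (f i + f j) := by
  have hj : j ∈ univ.erase i := mem_erase.2 ⟨hij.symm, mem_univ j⟩
  rw [← add_sum_erase _ f (mem_univ i), ← add_sum_erase _ f hj, ← add_sum_erase _ g (mem_univ i),
    ← add_sum_erase _ g hj, sum_congr rfl fun k hk =>
      h k (ne_of_mem_erase (mem_of_mem_erase hk)) (ne_of_mem_erase hk)]
  ring

lemma rk_mul_swap (w : Perm (Fin n)) {i j : Fin n} (hij : i < j) (hw : w j < w i) (a b : ℕ) :
    rk (w * swap i j) a b =
      rk w a b + if (i : ℕ) < a ∧ a ≤ j ∧ (w j : ℕ) < b ∧ b ≤ w i then 1 else 0 := by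
  have hreindex : rk (w * swap i j) a b =
      ∑ k, if ((swap i j k : Fin n) : ℕ) < a ∧ (w k : ℕ) < b then 1 else 0 := by
    rw [rk_eq_sum]
    exact Fintype.sum_equiv (swap i j) _ _ fun k => by
      simp only [Perm.mul_apply, swap_apply_self]; exact if_congr Iff.rfl rfl rfl
  have hpair := sum_add_eq_sum_add_of_eq_off_pair
    (f := fun k => if ((swap i j k : Fin n) : ℕ) < a ∧ (w k : ℕ) < b then 1 else 0)
    (g := fun k => if (k : ℕ) < a ∧ (w k : ℕ) < b then 1 else 0) hij.ne
    fun k hi hj => by simp only [swap_apply_of_ne_of_ne hi hj]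
  rw [hreindex, rk_eq_sum]
  simp only [swap_apply_left, swap_apply_right] at hpair
  split_ifs at hpair ⊢ <;> omega

lemma rk_eq_of_eq_below {z w : Perm (Fin n)} {i : Fin n} (h : ∀ k < i, z k = w k) (b : ℕ) :
    rk z i b = rk w i b := by
  simp only [rk_eq_sum]
  refine sum_congr rfl fun k _ => ?_
  by_cases hk : (k : ℕ) < i
  · rw [h k hk]
  · simp [hk]

lemma rk_eq_rk_add_add (u : Perm (Fin n)) {i : Fin n} {a : ℕ} (hia : (i : ℕ) < a) (b : ℕ) :
    rk u a b = rk u i b + (if (u i : ℕ) < b then 1 else 0) +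
      #{k | i < k ∧ (k : ℕ) < a ∧ (u k : ℕ) < b} := by
  rw [rk_eq_sum, rk_eq_sum, card_filter,
    ← Fintype.sum_ite_eq' i fun k => if (u k : ℕ) < b then 1 else 0,
    ← sum_add_distrib, ← sum_add_distrib]
  refine sum_congr rfl fun k _ => ?_
  have : k = i ↔ (k : ℕ) = i := Fin.val_inj.symm
  split_ifs <;> omega

end Rank

section Length

def inversions (w : Perm (Fin n)) : Finset (Fin n × Fin n) :=
  {p | p.1 < p.2 ∧ w p.2 < w p.1}

lemma mem_inversions {w : Perm (Fin n)} {p : Fin n × Fin n} :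
    p ∈ inversions w ↔ p.1 < p.2 ∧ w p.2 < w p.1 := by
  simp [inversions]

-- When `swap i j` reverses the order of `p`, then `p` is `(i, k)` or `(k, j)` with `i < k < j`,
-- and an inversion of `w * swap i j` of that form is already an inversion of `w`.
def swapPair (i j : Fin n) (p : Fin n × Fin n) : Fin n × Fin n :=
  if swap i j p.1 < swap i j p.2 then (swap i j p.1, swap i j p.2) else p

lemma swapPair_swapPair (i j : Fin n) {p : Fin n × Fin n} (hp : p.1 < p.2) :
    swapPair i j (swapPair i j p) = p := by
  unfold swapPair
  split_ifs with h <;> simp_all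

lemma swapPair_mem_erase_inversions {w : Perm (Fin n)} {i j : Fin n} (hij : i < j)
    (hw : w j < w i) {p : Fin n × Fin n} (hp : p ∈ inversions (w * swap i j)) :
    swapPair i j p ∈ (inversions w).erase (i, j) := by
  obtain ⟨x, y⟩ := p
  rw [mem_inversions] at hp
  simp only [Perm.mul_apply] at hp
  simp only [swapPair, mem_erase, mem_inversions, ne_eq]
  rw [swap_apply_def, swap_apply_def] at *
  split_ifs at * <;> simp_all <;> omega

lemma len_mul_swap_lt {w : Perm (Fin n)} {i j : Fin n} (hij : i < j) (hw : w j < w i) :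
    len (w * swap i j) < len w := by
  have hmem : (i, j) ∈ inversions w := mem_inversions.2 ⟨hij, hw⟩
  have hle : #(inversions (w * swap i j)) ≤ #((inversions w).erase (i, j)) := by
    refine card_le_card_of_injOn (swapPair i j)
      (fun p hp => swapPair_mem_erase_inversions hij hw hp) fun p hp q hq hpq => ?_
    rw [← swapPair_swapPair i j (mem_inversions.1 hp).1, hpq,
      swapPair_swapPair i j (mem_inversions.1 hq).1]
  rw [card_erase_of_mem hmem] at hle
  have := card_pos.2 ⟨_, hmem⟩
  change #(inversions (w * swap i j)) < #(inversions w)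
  omega

end Length

section Bruhat

lemma apply_lt_apply_of_eq_below {z w : Perm (Fin n)} (hle : BruhatLE z w) {i : Fin n}
    (hbelow : ∀ k < i, z k = w k) (hi : z i ≠ w i) : z i < w i := by
  have h := hle (i + 1) i.isLt (w i + 1) (w i).isLt
  have hempty : ∀ u : Perm (Fin n), #{k | i < k ∧ (k : ℕ) < i + 1 ∧ (u k : ℕ) < w i + 1} = 0 :=
    fun u => card_eq_zero.2 (filter_eq_empty_iff.2 fun k _ => by omega)
  rw [rk_eq_rk_add_add w (Nat.lt_succ_self _), rk_eq_rk_add_add z (Nat.lt_succ_self _),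
    rk_eq_of_eq_below hbelow, hempty, hempty] at h
  have := Fin.val_ne_of_ne hi
  split_ifs at h <;> omega

lemma rk_lt_rk_of_eq_below {z w : Perm (Fin n)} (hle : BruhatLE z w) {i j : Fin n}
    (hbelow : ∀ k < i, z k = w k) (hzj : z i ≤ w j)
    (hjmin : ∀ k, i < k → k < j → w k < w i → w k < z i)
    {a b : ℕ} (ha : a ≤ n) (hia : (i : ℕ) < a) (haj : a ≤ j) (hjb : (w j : ℕ) < b)
    (hbi : b ≤ w i) : rk w a b < rk z a b := by
  have hcmp := hle a ha (z i) (z i).isLt.le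
  have hw_mid : #{k | i < k ∧ (k : ℕ) < a ∧ (w k : ℕ) < b} =
      #{k | i < k ∧ (k : ℕ) < a ∧ (w k : ℕ) < z i} := by
    congr 1
    refine filter_congr fun k _ => ⟨fun ⟨hik, hka, hkb⟩ => ⟨hik, hka, ?_⟩, by omega⟩
    exact hjmin k hik (by omega) (by omega)
  have hz_mid : #{k | i < k ∧ (k : ℕ) < a ∧ (z k : ℕ) < z i} ≤
      #{k | i < k ∧ (k : ℕ) < a ∧ (z k : ℕ) < b} :=
    card_le_card fun k hk => by
      simp only [mem_filter, mem_univ, true_and] at hk ⊢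
      omega
  rw [rk_eq_rk_add_add w hia, rk_eq_rk_add_add z hia, rk_eq_of_eq_below hbelow] at hcmp ⊢
  split_ifs at hcmp ⊢ <;> omega

lemma BruhatLE.exists_mul_swap {z w : Perm (Fin n)} (hle : BruhatLE z w) (hne : z ≠ w) :
    ∃ i j : Fin n, i < j ∧ w j < w i ∧ BruhatLE z (w * swap i j) := by
  obtain ⟨i, hi, hmin⟩ := wellFounded_lt.has_min {k | z k ≠ w k}
    (by
      contrapose! hne
      exact Equiv.ext fun k => by simpa using Set.eq_empty_iff_forall_notMem.1 hne k)
  have hbelow : ∀ k < i, z k = w k := fun k hk => by_contra fun h => hmin k h hk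
  have hzi := apply_lt_apply_of_eq_below hle hbelow hi
  have hafter : i < w⁻¹ (z i) := by
    by_contra! h
    rcases h.lt_or_eq with h | h
    · exact h.ne (z.injective ((hbelow _ h).trans (w.apply_symm_apply _)))
    · exact hi ((w.apply_symm_apply _).symm.trans (congrArg w h))
  obtain ⟨j, ⟨hij, hzj, hji⟩, hjmin⟩ := wellFounded_lt.has_min
    {k | i < k ∧ z i ≤ w k ∧ w k < w i} ⟨_, hafter, by simp, by simpa using hzi⟩
  refine ⟨i, j, hij, hji, fun a ha b hb => ?_⟩
  rw [rk_mul_swap w hij hji]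
  split_ifs with hbox
  · exact rk_lt_rk_of_eq_below hle hbelow hzj
      (fun k hik hkj hki => by by_contra! h; exact hjmin k ⟨hik, h, hki⟩ hkj) ha
      hbox.1 hbox.2.1 hbox.2.2.1 hbox.2.2.2
  · exact hle a ha b hb

lemma len_lt_of_bruhatLE {z w : Perm (Fin n)} (hle : BruhatLE z w) (hne : z ≠ w) :
    len z < len w := by
  induction hw : len w using Nat.strong_induction_on generalizing w with
  | _ m ih =>
  obtain ⟨i, j, hij, hji, hle'⟩ := hle.exists_mul_swap hne
  have hlt := len_mul_swap_lt hij hji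
  rcases eq_or_ne z (w * swap i j) with rfl | hne'
  · omega
  · have := ih _ (hw ▸ hlt) hle' hne' rfl
    omega

def IsCoveringInversion (w : Perm (Fin n)) (i j : Fin n) : Prop :=
  i < j ∧ w j < w i ∧ ∀ k, i < k → k < j → ¬ (w j < w k ∧ w k < w i)

lemma BruhatLE.exists_isCoveringInversion {z w : Perm (Fin n)} (hle : BruhatLE z w)
    (hlen : len z + 1 = len w) : ∃ i j, IsCoveringInversion w i j ∧ z = w * swap i j := by
  obtain ⟨i, j, hij, hji, hle'⟩ := hle.exists_mul_swap (by rintro rfl; omega)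
  have hlt := len_mul_swap_lt hij hji
  have hz : z = w * swap i j := by
    by_contra hne
    have := len_lt_of_bruhatLE hle' hne
    omega
  refine ⟨i, j, ⟨hij, hji, fun k hik hkj ⟨hjk, hki⟩ => ?_⟩, hz⟩
  -- otherwise `z < w * swap i k < w`, leaving no room for `len z + 1 = len w`
  have hle'' : BruhatLE z (w * swap i k) := fun a ha b hb => by
    rw [hz, rk_mul_swap w hij hji, rk_mul_swap w hik hki]
    split_ifs <;> omega
  have hne : z ≠ w * swap i k := fun h => by
    have hk := congrArg (· k) h
    simp only [hz, Perm.mul_apply, swap_apply_right,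
      swap_apply_of_ne_of_ne hik.ne' hkj.ne] at hk
    exact hki.ne hk
  have := len_lt_of_bruhatLE hle'' hne
  have := len_mul_swap_lt hik hki
  omega

lemma apply_lt_apply_of_bruhatLE_mul_swap {w : Perm (Fin n)} {i j : Fin n} (hij : i < j)
    (hle : BruhatLE w (w * swap i j)) : w i < w j := by
  by_contra! h
  have hji : w j < w i := h.lt_of_ne (w.injective.ne hij.ne')
  have := hle (i + 1) i.isLt (w j + 1) (w j).isLt
  rw [rk_mul_swap w hij hji, if_pos (by omega)] at this
  omega

end Bruhat

section Adjacent

variable {w : Perm (Fin n)} {l l' : Fin n}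

lemma swap_lt_swap_of_lt (hl : (l' : ℕ) = l + 1) {x y : Fin n} (hxy : x < y)
    (hne : ¬ (x = l ∧ y = l')) : swap l l' x < swap l l' y := by
  rw [swap_apply_def, swap_apply_def]
  split_ifs <;> simp_all <;> omega

lemma has3412_or_of_has3412_mul_swap (hl : (l' : ℕ) = l + 1) (hasc : w l < w l')
    (h : Has3412 (w * swap l l')) :
    Has3412 w ∨ ∃ a d, a < l ∧ l' < d ∧ w l < w d ∧ w d < w a ∧ w a < w l' := by
  obtain ⟨a, b, c, d, hab, hbc, hcd, h1, h2, h3⟩ := h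
  simp only [Perm.mul_apply] at h1 h2 h3
  by_cases hbc' : b = l ∧ c = l'
  · obtain ⟨rfl, rfl⟩ := hbc'
    rw [swap_apply_of_ne_of_ne (x := a) (by omega) (by omega),
      swap_apply_of_ne_of_ne (x := d) (by omega) (by omega), swap_apply_left,
      swap_apply_right] at *
    exact Or.inr ⟨a, d, hab, hcd, h1, h2, h3⟩
  refine Or.inl ⟨_, _, _, _, swap_lt_swap_of_lt hl hab ?_, swap_lt_swap_of_lt hl hbc hbc',
    swap_lt_swap_of_lt hl hcd ?_, h1, h2, h3⟩
  · rintro ⟨rfl, rfl⟩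
    rw [swap_apply_left, swap_apply_right] at h3
    exact h3.not_gt hasc
  · rintro ⟨rfl, rfl⟩
    rw [swap_apply_left, swap_apply_right] at h1
    exact h1.not_gt hasc

lemma has4231_or_of_has4231_mul_swap (hl : (l' : ℕ) = l + 1) (hasc : w l < w l')
    (h : Has4231 (w * swap l l')) :
    Has4231 w ∨ (∃ c d, l' < c ∧ c < d ∧ w d < w l ∧ w l < w c ∧ w c < w l') ∨
      ∃ a b, a < b ∧ b < l ∧ w l < w b ∧ w b < w l' ∧ w l' < w a := by
  obtain ⟨a, b, c, d, hab, hbc, hcd, h1, h2, h3⟩ := h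
  simp only [Perm.mul_apply] at h1 h2 h3
  by_cases hab' : a = l ∧ b = l'
  · obtain ⟨rfl, rfl⟩ := hab'
    rw [swap_apply_of_ne_of_ne (x := c) (by omega) (by omega),
      swap_apply_of_ne_of_ne (x := d) (by omega) (by omega), swap_apply_left,
      swap_apply_right] at *
    exact Or.inr (Or.inl ⟨c, d, hbc, hcd, h1, h2, h3⟩)
  by_cases hcd' : c = l ∧ d = l'
  · obtain ⟨rfl, rfl⟩ := hcd'
    rw [swap_apply_of_ne_of_ne (x := a) (by omega) (by omega),
      swap_apply_of_ne_of_ne (x := b) (by omega) (by omega), swap_apply_left,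
      swap_apply_right] at *
    exact Or.inr (Or.inr ⟨a, b, hab, hbc, h1, h2, h3⟩)
  refine Or.inl ⟨_, _, _, _, swap_lt_swap_of_lt hl hab hab', swap_lt_swap_of_lt hl hbc ?_,
    swap_lt_swap_of_lt hl hcd hcd', h1, h2, h3⟩
  rintro ⟨rfl, rfl⟩
  rw [swap_apply_left, swap_apply_right] at h2
  exact h2.not_gt hasc

lemma right_eq_or_left_eq_of_mul_swap_descent (hl : (l' : ℕ) = l + 1) (hasc : w l < w l')
    {i j : Fin n} (hij : i < j) (hji : w j < w i)
    (hdesc : (w * swap i j) l' < (w * swap i j) l) :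
    (j = l ∧ w l' < w i) ∨ (i = l' ∧ w j < w l) := by
  simp only [Perm.mul_apply, swap_apply_def] at hdesc
  split_ifs at hdesc <;> subst_vars <;> omega

lemma SmoothPerm.not_isCoveringInversion_left (hw : SmoothPerm w) (hl : (l' : ℕ) = l + 1)
    (hasc : w l < w l') (hsing : Has3412 (w * swap l l') ∨ Has4231 (w * swap l l'))
    {i : Fin n} (hi : w l' < w i) : ¬ IsCoveringInversion w i l := by
  rintro ⟨hil, -, hcov⟩
  rcases hsing with h | h
  · rcases has3412_or_of_has3412_mul_swap hl hasc h with h | ⟨a, d, hal, hld, h1, h2, h3⟩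
    · exact hw.1 h
    rcases lt_trichotomy a i with hai | rfl | hia
    · exact hw.1 ⟨a, i, l, d, hai, hil, by omega, h1, h2, by omega⟩
    · exact (h3.trans hi).false
    · exact hcov a hia hal ⟨by omega, by omega⟩
  · rcases has4231_or_of_has4231_mul_swap hl hasc h with
      h | ⟨c, d, hlc, hcd, h1, h2, h3⟩ | ⟨a, b, hab, hbl, h1, h2, h3⟩
    · exact hw.2 h
    · exact hw.2 ⟨i, l, c, d, hil, by omega, hcd, h1, h2, by omega⟩
    rcases lt_trichotomy b i with hbi | rfl | hib
    · rcases lt_trichotomy (w a) (w i) with hai | hai | hai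
      · exact hw.1 ⟨a, i, l, l', hab.trans hbi, hil, by omega, hasc, h3, hai⟩
      · exact (hab.trans hbi).ne (w.injective hai)
      · exact hw.2 ⟨a, b, i, l, hab, hbi, hil, h1, by omega, hai⟩
    · exact (h2.trans hi).false
    · exact hcov b hib hbl ⟨h1, by omega⟩

lemma SmoothPerm.not_isCoveringInversion_right (hw : SmoothPerm w) (hl : (l' : ℕ) = l + 1)
    (hasc : w l < w l') (hsing : Has3412 (w * swap l l') ∨ Has4231 (w * swap l l'))
    {j : Fin n} (hj : w j < w l) : ¬ IsCoveringInversion w l' j := by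
  rintro ⟨hlj, -, hcov⟩
  rcases hsing with h | h
  · rcases has3412_or_of_has3412_mul_swap hl hasc h with h | ⟨a, d, hal, hld, h1, h2, h3⟩
    · exact hw.1 h
    rcases lt_trichotomy d j with hdj | rfl | hjd
    · exact hcov d hld hdj ⟨hj.trans h1, by omega⟩
    · exact (hj.trans h1).false
    · exact hw.1 ⟨a, l', j, d, by omega, hlj, hjd, hj.trans h1, h2, h3⟩
  · rcases has4231_or_of_has4231_mul_swap hl hasc h with
      h | ⟨c, d, hlc, hcd, h1, h2, h3⟩ | ⟨a, b, hab, hbl, h1, h2, h3⟩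
    · exact hw.2 h
    · rcases lt_trichotomy c j with hcj | rfl | hjc
      · exact hcov c hlc hcj ⟨hj.trans h2, h3⟩
      · exact (hj.trans h2).false
      rcases lt_trichotomy (w d) (w j) with hdj | hdj | hdj
      · exact hw.2 ⟨l', j, c, d, hlj, hjc, hcd, hdj, hj.trans h2, h3⟩
      · exact (hjc.trans hcd).ne' (w.injective hdj)
      · exact hw.1 ⟨l, l', j, d, by omega, hlj, hjc.trans hcd, hdj, h1, hasc⟩
    · exact hw.2 ⟨a, b, l', j, hab, by omega, hlj, hj.trans h1, h2, h3⟩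

end Adjacent

end Permutations

theorem stmt5_general {n : ℕ} (w : Equiv.Perm (Fin n)) (hw : SmoothPerm w)
    (l : Fin n) (hl : (l : ℕ) + 1 < n)
    (s : Equiv.Perm (Fin n)) (hs : s = Equiv.swap l ⟨(l : ℕ) + 1, hl⟩)
    (h2 : BruhatLT w (w * s))
    (hws : Has3412 (w * s) ∨ Has4231 (w * s)) :
    ¬ ∃ z : Equiv.Perm (Fin n),
      BruhatLE z w ∧ len z + 1 = len w ∧ BruhatLT (z * s) z := by
  rintro ⟨z, hzw, hlen, hzs, -⟩
  set l' : Fin n := ⟨(l : ℕ) + 1, hl⟩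
  have hl' : (l' : ℕ) = l + 1 := rfl
  have hll' : l < l' := Fin.lt_def.2 (by omega)
  subst hs
  have hasc : w l < w l' := apply_lt_apply_of_bruhatLE_mul_swap hll' h2.1
  have hdesc : z l' < z l := by
    simpa using apply_lt_apply_of_bruhatLE_mul_swap hll' (w := z * swap l l')
      (by rwa [mul_assoc, swap_mul_self, mul_one])
  obtain ⟨i, j, hcov, rfl⟩ := hzw.exists_isCoveringInversion hlen
  rcases right_eq_or_left_eq_of_mul_swap_descent hl' hasc hcov.1 hcov.2.1 hdesc with
    ⟨rfl, hi⟩ | ⟨rfl, hj⟩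
  · exact hw.not_isCoveringInversion_left hl' hasc hws hi hcov
  · exact hw.not_isCoveringInversion_right hl' hasc hws hj hcov

/-- For smooth `w` with `sw < w < ws`: if `ws` is singular then no `z` covered
by `w` satisfies `zs < z`. -/
theorem stmt5 {n : ℕ} (w : Equiv.Perm (Fin n)) (hw : SmoothPerm w)
    (l : Fin n) (hl : (l : ℕ) + 1 < n)
    (s : Equiv.Perm (Fin n)) (hs : s = Equiv.swap l ⟨(l : ℕ) + 1, hl⟩)
    (h1 : BruhatLT (s * w) w) (h2 : BruhatLT w (w * s))
    (hws : Has3412 (w * s) ∨ Has4231 (w * s)) :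
    ¬ ∃ z : Equiv.Perm (Fin n),
      BruhatLE z w ∧ len z + 1 = len w ∧ BruhatLT (z * s) z :=
  stmt5_general w hw l hl s hs h2 hws
end

section
/- Let w ∈ S_n avoid 3412 and 4231, and let s be a simple transposition with sw < w < ws. If no permutation z satisfies z ≤ w, ℓ(z) = ℓ(w) − 1, and zs < z, then ws contains the pattern 3412 or 4231. -/
open Equiv

/-!
Write `s = (l, l+1)`. From `w < ws` we get `w l < w (l+1)`, and from `sw < w` that the value
`l+1` stands to the left of the value `l`. If `(x, y)` is a cover transposition of `w` (no
position between `x` and `y` carries a value between `w y` and `w x`), then `z = w (x y)` lies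
below `w` with `ℓ(z) = ℓ(w) - 1`, so by hypothesis `z` has no descent at `l`.

A value smaller than `w l` to the right of `l+1` can be moved towards `l+1` until `(l+1, y')` is
a cover transposition; the absence of a descent of `w (l+1, y')` at `l` then yields a 4231 in
`ws` at positions `l, l+1, y', y`. A value larger than `w (l+1)` to the left of `l` is symmetric.
If there is neither, some value left of `l` exceeds some value right of `l+1`: otherwise `w`
would map the positions `≤ l` onto the values `≤ l`, placing the value `l` left of `l+1`. That
inversion, together with the positions `l, l+1`, is a 3412 in `ws`.
-/

namespace Equiv.Perm

variable {n : ℕ}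

lemma mul_swap_apply (w : Perm (Fin n)) (x y k : Fin n) :
    (w * swap x y) k = if k = x then w y else if k = y then w x else w k := by
  rw [mul_apply, swap_apply_def]
  split_ifs <;> rfl

end Equiv.Perm

section Bruhat

variable {n : ℕ}

lemma rk_mul_swap_add (w : Perm (Fin n)) {x y : Fin n} (hxy : x ≠ y) (i j : ℕ) :
    rk (w * swap x y) i j +
        ((if (x : ℕ) + 1 ≤ i ∧ (w x : ℕ) + 1 ≤ j then 1 else 0) +
          (if (y : ℕ) + 1 ≤ i ∧ (w y : ℕ) + 1 ≤ j then 1 else 0)) =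
      rk w i j +
        ((if (x : ℕ) + 1 ≤ i ∧ (w y : ℕ) + 1 ≤ j then 1 else 0) +
          (if (y : ℕ) + 1 ≤ i ∧ (w x : ℕ) + 1 ≤ j then 1 else 0)) := by
  have hsplit (P : Fin n → Prop) [DecidablePred P] :
      (Finset.univ.filter P).card = (if P x then 1 else 0) + ((if P y then 1 else 0) +
        ∑ k ∈ (Finset.univ.erase x).erase y, if P k then 1 else 0) := by
    rw [Finset.card_filter, ← Finset.add_sum_erase _ _ (Finset.mem_univ x),
      ← Finset.add_sum_erase _ _ (Finset.mem_erase.mpr ⟨hxy.symm, Finset.mem_univ y⟩)]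
  have hrest : ∑ k ∈ (Finset.univ.erase x).erase y,
        (if (k : ℕ) + 1 ≤ i ∧ ((w * swap x y) k : ℕ) + 1 ≤ j then 1 else 0) =
      ∑ k ∈ (Finset.univ.erase x).erase y,
        (if (k : ℕ) + 1 ≤ i ∧ (w k : ℕ) + 1 ≤ j then 1 else 0) := by
    refine Finset.sum_congr rfl fun k hk => ?_
    obtain ⟨hky, hkx, -⟩ := by simpa only [Finset.mem_erase] using hk
    rw [Perm.mul_swap_apply, if_neg hkx, if_neg hky]
  rw [rk, rk, hsplit, hsplit, hrest]
  simp only [Perm.mul_swap_apply, if_pos, if_neg hxy.symm]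
  omega

lemma bruhatLE_mul_swap (w : Perm (Fin n)) {x y : Fin n} (hxy : x < y) (hw : w y < w x) :
    BruhatLE (w * swap x y) w := by
  intro i _ j _
  have := rk_mul_swap_add w hxy.ne i j
  rw [Fin.lt_def] at hxy hw
  split_ifs at this <;> omega

lemma bruhatLT_mul_swap (w : Perm (Fin n)) {x y : Fin n} (hxy : x < y) (hw : w y < w x) :
    BruhatLT (w * swap x y) w := by
  refine ⟨bruhatLE_mul_swap w hxy hw, fun h => hw.ne ?_⟩
  conv_rhs => rw [← h]
  simp

lemma lt_of_bruhatLE_mul_swap {w : Perm (Fin n)} {x y : Fin n} (hxy : x < y)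
    (hle : BruhatLE w (w * swap x y)) : w x < w y := by
  refine (w.injective.ne hxy.ne).lt_or_gt.resolve_right fun hw => ?_
  have hrk := rk_mul_swap_add w hxy.ne (x + 1) (w y + 1)
  have := hle (x + 1) (by omega) (w y + 1) (by omega)
  rw [Fin.lt_def] at hxy hw
  split_ifs at hrk <;> omega

lemma lt_of_mul_swap_bruhatLE {w : Perm (Fin n)} {x y : Fin n} (hxy : x < y)
    (h : BruhatLE (w * swap x y) w) : w y < w x := by
  simpa using lt_of_bruhatLE_mul_swap (w := w * swap x y) hxy (by simpa [mul_assoc] using h)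

lemma rk_inv (w : Perm (Fin n)) (i j : ℕ) : rk w⁻¹ i j = rk w j i := by
  refine Finset.card_nbij' (⇑w⁻¹) w ?_ ?_ ?_ ?_ <;> intro k <;> simp +contextual

lemma BruhatLE.inv {z w : Perm (Fin n)} (h : BruhatLE z w) : BruhatLE z⁻¹ w⁻¹ := by
  intro i hi j hj
  simpa only [rk_inv] using h j hj i hi

end Bruhat

namespace Equiv.Perm

variable {n : ℕ}

def IsCoverSwap (w : Perm (Fin n)) (x y : Fin n) : Prop :=
  x < y ∧ w y < w x ∧ ∀ c, x < c → c < y → w c < w y ∨ w x < w c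

/-- Matches the inversions of `w * swap x y` with those of `w` other than `(x, y)`: it exchanges
`x` and `y` in the pairs whose other entry lies outside `[x, y]` and fixes all other pairs. -/
def swapPairMap (x y : Fin n) (p : Fin n × Fin n) : Fin n × Fin n :=
  if p.2 = x then (p.1, y)
  else if p.2 = y ∧ p.1 < x then (p.1, x)
  else if p.1 = y then (x, p.2)
  else if p.1 = x ∧ y < p.2 then (y, p.2)
  else p

lemma swapPairMap_swapPairMap {x y : Fin n} (hxy : x < y) {p : Fin n × Fin n} (hp : p.1 < p.2) :
    swapPairMap x y (swapPairMap x y p) = p := by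
  obtain ⟨a, b⟩ := p
  simp only [swapPairMap] at hp ⊢
  split_ifs <;> grind

lemma len_mul_swap_add_one {w : Perm (Fin n)} {x y : Fin n} (h : w.IsCoverSwap x y) :
    len (w * swap x y) + 1 = len w := by
  obtain ⟨hxy, hw, hcov⟩ := h
  have hmem : (x, y) ∈ Finset.univ.filter (fun p : Fin n × Fin n => p.1 < p.2 ∧ w p.2 < w p.1) := by
    simp [hxy, hw]
  rw [len, len, ← Finset.card_erase_add_one hmem]
  congr 1
  refine Finset.card_nbij' (swapPairMap x y) (swapPairMap x y) ?_ ?_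
    (fun p hp => swapPairMap_swapPairMap hxy (Finset.mem_filter.mp hp).2.1)
    (fun p hp => swapPairMap_swapPairMap hxy (Finset.mem_filter.mp (Finset.mem_of_mem_erase hp)).2.1)
  all_goals
    rintro ⟨a, b⟩
    simp only [Finset.coe_filter, Finset.coe_erase, Finset.mem_univ, true_and, Set.mem_ofPred_eq,
      Set.mem_sdiff, Set.mem_singleton_iff, mul_swap_apply, swapPairMap]
    intro h
    split_ifs at h ⊢ <;> grind

lemma exists_isCoverSwap_right (w : Perm (Fin n)) {x y : Fin n} (hxy : x < y) (hw : w y < w x) :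
    ∃ y', y' ≤ y ∧ w y ≤ w y' ∧ w.IsCoverSwap x y' := by
  induction y using WellFoundedLT.induction with
  | ind y ih =>
    by_cases hcov : ∀ c, x < c → c < y → w c < w y ∨ w x < w c
    · exact ⟨y, le_rfl, le_rfl, hxy, hw, hcov⟩
    push Not at hcov
    obtain ⟨c, hxc, hcy, hyc, hcx⟩ := hcov
    have hyc : w y < w c := hyc.lt_of_ne fun h => hcy.ne' (w.injective h)
    have hcx : w c < w x := hcx.lt_of_ne fun h => hxc.ne' (w.injective h)
    obtain ⟨y', hy'c, hcy', hcov'⟩ := ih c hcy hxc hcx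
    exact ⟨y', hy'c.trans hcy.le, hyc.le.trans hcy', hcov'⟩

lemma exists_isCoverSwap_left (w : Perm (Fin n)) {x y : Fin n} (hxy : x < y) (hw : w y < w x) :
    ∃ x', x ≤ x' ∧ w x' ≤ w x ∧ w.IsCoverSwap x' y := by
  induction x using WellFoundedGT.induction with
  | ind x ih =>
    by_cases hcov : ∀ c, x < c → c < y → w c < w y ∨ w x < w c
    · exact ⟨x, le_rfl, le_rfl, hxy, hw, hcov⟩
    push Not at hcov
    obtain ⟨c, hxc, hcy, hyc, hcx⟩ := hcov
    have hyc : w y < w c := hyc.lt_of_ne fun h => hcy.ne' (w.injective h)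
    have hcx : w c < w x := hcx.lt_of_ne fun h => hxc.ne' (w.injective h)
    obtain ⟨x', hcx', hx'c, hcov'⟩ := ih c hxc hcy hyc
    exact ⟨x', hxc.le.trans hcx', hx'c.trans hcx.le, hcov'⟩

lemma lt_iff_apply_lt_of_forall_lt {w : Perm (Fin n)} {m : Fin n}
    (h : ∀ i < m, ∀ j, m ≤ j → w i < w j) (k : Fin n) : k < m ↔ w k < m := by
  have hmaps : ∀ i < m, w i < m := by
    intro i hi
    by_contra! hmi
    have hcard := Finset.card_le_card_of_injOn (⇑w⁻¹) (s := Finset.Iic (w i))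
      (t := Finset.Iio m) (fun v hv => ?_) w⁻¹.injective.injOn
    · simp only [Fin.card_Iic, Fin.card_Iio] at hcard
      rw [Fin.le_def] at hmi
      omega
    simp only [Finset.coe_Iic, Set.mem_Iic, Finset.coe_Iio, Set.mem_Iio] at hv ⊢
    by_contra! hv'
    have := h i hi _ hv'
    simp only [coe_inv, apply_symm_apply] at this
    exact absurd hv this.not_ge
  have himage : (Finset.Iio m).map w.toEmbedding = Finset.Iio m :=
    Finset.map_eq_of_subset fun v hv => by
      obtain ⟨i, hi, rfl⟩ := Finset.mem_map.mp hv
      simpa using hmaps i (by simpa using hi)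
  refine ⟨hmaps k, fun hk => ?_⟩
  obtain ⟨i, hi, hik⟩ := Finset.mem_map.mp (himage ▸ Finset.mem_Iio.mpr hk)
  simpa [w.injective hik] using hi

lemma has4231_mul_swap_of_right {w : Perm (Fin n)} {l l' y : Fin n} (hll : l < l')
    (hasc : w l < w l')
    (hno : ∀ x y, w.IsCoverSwap x y → ¬ (w * swap x y) l' < (w * swap x y) l)
    (hy : l' < y) (hwy : w y < w l) : Has4231 (w * swap l l') := by
  obtain ⟨c, hcy, hyc, hcov⟩ := w.exists_isCoverSwap_right hy (hwy.trans hasc)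
  have hz := hno l' c hcov
  obtain ⟨hlc', hwc, -⟩ := hcov
  simp only [mul_swap_apply, hll.ne, (hll.trans hlc').ne, ↓reduceIte, not_lt] at hz
  have hlc : w l < w c := hz.lt_of_ne fun h => (hll.trans hlc').ne (w.injective h)
  have hcy : c < y := hcy.lt_of_ne fun h => by subst h; order
  refine ⟨l, l', c, y, hll, hlc', hcy, ?_, ?_, ?_⟩ <;> simp only [mul_swap_apply] <;>
    split_ifs <;> order

lemma has4231_mul_swap_of_left {w : Perm (Fin n)} {l l' x : Fin n} (hll : l < l')
    (hasc : w l < w l')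
    (hno : ∀ x y, w.IsCoverSwap x y → ¬ (w * swap x y) l' < (w * swap x y) l)
    (hx : x < l) (hwx : w l' < w x) : Has4231 (w * swap l l') := by
  obtain ⟨c, hxc, hcx, hcov⟩ := w.exists_isCoverSwap_left hx (hasc.trans hwx)
  have hz := hno c l hcov
  obtain ⟨hcl, hwl, -⟩ := hcov
  simp only [mul_swap_apply, (hcl.trans hll).ne', ↓reduceIte, hll.ne', hcl.ne', not_lt] at hz
  have hcl' : w c < w l' := hz.lt_of_ne fun h => (hcl.trans hll).ne (w.injective h)
  have hxc : x < c := hxc.lt_of_ne fun h => by subst h; order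
  refine ⟨x, c, l, l', hxc, hcl, hll, ?_, ?_, ?_⟩ <;> simp only [mul_swap_apply] <;>
    split_ifs <;> order

lemma has3412_mul_swap_of_forall {w : Perm (Fin n)} {l l' : Fin n}
    (hll : (l : ℕ) + 1 = l') (hasc : w l < w l') (hinv : w⁻¹ l' < w⁻¹ l)
    (hright : ∀ y, l' < y → w l < w y) (hleft : ∀ x, x < l → w x < w l') :
    Has3412 (w * swap l l') := by
  have hlt : l < l' := Fin.lt_def.mpr (by omega)
  obtain ⟨i, hi, j, hj, hji⟩ : ∃ i < l, ∃ j, l' < j ∧ w j < w i := by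
    by_contra! h
    have hblock := lt_iff_apply_lt_of_forall_lt (w := w) (m := l') fun i hi j hj => by
      have hi : i ≤ l := Fin.le_def.mpr (by rw [Fin.lt_def] at hi; omega)
      rcases hi.lt_or_eq with hi | rfl <;> rcases hj.lt_or_eq with hj | rfl
      · exact (h i hi j hj).lt_of_ne fun e => (hi.trans (hlt.trans hj)).ne (w.injective e)
      · exact hleft i hi
      · exact hright j hj
      · exact hasc
    have hq : w⁻¹ l < l' := (hblock _).mpr (by simpa using hlt)
    have hp : ¬ w⁻¹ l' < l' := fun hp => (lt_irrefl l') (by simpa using (hblock _).mp hp)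
    exact hp (hinv.trans hq)
  have hwl := hright j hj
  have hwl' := hleft i hi
  refine ⟨i, l, l', j, hi, hlt, hj, ?_, ?_, ?_⟩ <;> simp only [mul_swap_apply] <;>
    split_ifs <;> order

end Equiv.Perm

theorem stmt6_general {n : ℕ} (w : Equiv.Perm (Fin n))
    (l : Fin n) (hl : (l : ℕ) + 1 < n)
    (s : Equiv.Perm (Fin n)) (hs : s = Equiv.swap l ⟨(l : ℕ) + 1, hl⟩)
    (h1 : BruhatLT (s * w) w) (h2 : BruhatLT w (w * s))
    (hno : ¬ ∃ z : Equiv.Perm (Fin n),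
      BruhatLE z w ∧ len z + 1 = len w ∧ BruhatLT (z * s) z) :
    Has3412 (w * s) ∨ Has4231 (w * s) := by
  set l' : Fin n := ⟨(l : ℕ) + 1, hl⟩
  subst hs
  have hll : l < l' := Fin.lt_def.mpr (Nat.lt_succ_self _)
  have hasc : w l < w l' := lt_of_bruhatLE_mul_swap hll h2.1
  have hinv : w⁻¹ l' < w⁻¹ l :=
    lt_of_mul_swap_bruhatLE hll (by simpa only [mul_inv_rev, swap_inv] using h1.1.inv)
  have hcov (x y : Fin n) (hxy : w.IsCoverSwap x y) : ¬ (w * swap x y) l' < (w * swap x y) l :=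
    fun hd => hno ⟨_, bruhatLE_mul_swap w hxy.1 hxy.2.1, Perm.len_mul_swap_add_one hxy,
      bruhatLT_mul_swap _ hll hd⟩
  by_cases hright : ∃ y, l' < y ∧ w y < w l
  · obtain ⟨y, hy, hwy⟩ := hright
    exact Or.inr (Perm.has4231_mul_swap_of_right hll hasc hcov hy hwy)
  by_cases hleft : ∃ x, x < l ∧ w l' < w x
  · obtain ⟨x, hx, hwx⟩ := hleft
    exact Or.inr (Perm.has4231_mul_swap_of_left hll hasc hcov hx hwx)
  push Not at hright hleft
  refine Or.inl (Perm.has3412_mul_swap_of_forall rfl hasc hinv (fun y hy => ?_) fun x hx => ?_)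
  · exact (hright y hy).lt_of_ne (w.injective.ne (hll.trans hy).ne)
  · exact (hleft x hx).lt_of_ne (w.injective.ne (hx.trans hll).ne)

/-- For smooth `w` with `sw < w < ws`: if no `z` covered by `w` satisfies
`zs < z`, then `ws` contains 3412 or 4231. -/
theorem stmt6 {n : ℕ} (w : Equiv.Perm (Fin n)) (hw : SmoothPerm w)
    (l : Fin n) (hl : (l : ℕ) + 1 < n)
    (s : Equiv.Perm (Fin n)) (hs : s = Equiv.swap l ⟨(l : ℕ) + 1, hl⟩)
    (h1 : BruhatLT (s * w) w) (h2 : BruhatLT w (w * s))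
    (hno : ¬ ∃ z : Equiv.Perm (Fin n),
      BruhatLE z w ∧ len z + 1 = len w ∧ BruhatLT (z * s) z) :
    Has3412 (w * s) ∨ Has4231 (w * s) :=
  stmt6_general w l hl s hs h1 h2 hno
end
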